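/- arXiv:2405.14432 — 3 statements merged into one kernel-verified Lean document; each statement's English description precedes it below -/
import Mathlib

section
/- Let x_1,…,x_m ∈ ℝ^d with mean x̄, let C ≥ 0, set yᵢ = clip_C(xᵢ), and let S_c = {i : ‖xᵢ‖ > C}. For each i ∈ S_c, ‖yᵢ − x̄‖² − ‖xᵢ − x̄‖² ≤ (‖xᵢ‖ − C)(2‖x̄‖ − ‖xᵢ‖ − C). -/
/-!
Write the clipped vector as `t • x` with `t = C / ‖x‖ ≤ 1`. Expanding both squares, the
difference is `(1 - t) (2 ⟪x, v⟫ - (1 + t) ‖x‖²)`, and Cauchy–Schwarz bounds `⟪x, v⟫` by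
`‖x‖ ‖v‖` because the factor `1 - t` is nonnegative; finally `t ‖x‖ = C`.
-/

noncomputable def clip {d : ℕ} (C : ℝ) (x : EuclideanSpace ℝ (Fin d)) :
    EuclideanSpace ℝ (Fin d) :=
  (min 1 (C / ‖x‖)) • x

theorem norm_smul_sub_sq_sub_norm_sub_sq_le {E : Type*} [NormedAddCommGroup E]
    [InnerProductSpace ℝ E] {t : ℝ} (ht : t ≤ 1) (x v : E) :
    ‖t • x - v‖ ^ 2 - ‖x - v‖ ^ 2 ≤ (1 - t) * ‖x‖ * (2 * ‖v‖ - (1 + t) * ‖x‖) := by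
  have expand : ‖t • x - v‖ ^ 2 - ‖x - v‖ ^ 2
      = (1 - t) * (2 * inner ℝ x v - (1 + t) * ‖x‖ ^ 2) := by
    rw [norm_sub_sq_real, norm_sub_sq_real, real_inner_smul_left, norm_smul,
      Real.norm_eq_abs, mul_pow, sq_abs]
    ring
  have cauchy_schwarz : inner ℝ x v ≤ ‖x‖ * ‖v‖ := real_inner_le_norm x v
  rw [expand]
  nlinarith [mul_le_mul_of_nonneg_left cauchy_schwarz (sub_nonneg.2 ht)]

theorem clip_of_le_norm {d : ℕ} {C : ℝ} {x : EuclideanSpace ℝ (Fin d)} (h : C ≤ ‖x‖) :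
    clip C x = (C / ‖x‖) • x := by
  rw [clip, min_eq_right (div_le_one_of_le₀ h (norm_nonneg x))]

theorem one_point_clipping_bound {d m : ℕ} (C : ℝ) (hC : 0 ≤ C)
    (x : Fin m → EuclideanSpace ℝ (Fin d)) (i : Fin m) (hi : ‖x i‖ > C) :
    ‖clip C (x i) - (m : ℝ)⁻¹ • ∑ j, x j‖ ^ 2 - ‖x i - (m : ℝ)⁻¹ • ∑ j, x j‖ ^ 2
      ≤ (‖x i‖ - C) * (2 * ‖(m : ℝ)⁻¹ • ∑ j, x j‖ - ‖x i‖ - C) := by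
  have hx : ‖x i‖ ≠ 0 := (hC.trans_lt hi).ne'
  rw [clip_of_le_norm hi.le]
  calc _ ≤ (1 - C / ‖x i‖) * ‖x i‖ * (2 * ‖(m : ℝ)⁻¹ • ∑ j, x j‖ - (1 + C / ‖x i‖) * ‖x i‖) :=
        norm_smul_sub_sq_sub_norm_sub_sq_le (div_le_one_of_le₀ hi.le (norm_nonneg _)) _ _
    _ = _ := by field_simp; ring
end

section
/- Variance reduction under clipping, case ‖x̄‖ > C: with the notation above and ‖x̄‖ > C, (1/m)Σᵢ‖yᵢ − ȳ‖² ≤ (1/m)Σᵢ‖xᵢ − x̄‖² − (|S∖S_c|/m)(‖x̄‖ − C)² − (1/m)Σ_{i∈S_c}(‖xᵢ‖ − ‖x̄‖)². -/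
open scoped Classical

/-! The mean of the clipped points minimises the sum of squared distances to them, so it may be
replaced by `clip C x̄ = (C / ‖x̄‖) • x̄`, and the claim becomes pointwise. For real `α, β`,
`‖α • a - β • b‖² = (α‖a‖ - β‖b‖)² + αβ (‖a - b‖² - (‖a‖ - ‖b‖)²)`: clipping multiplies the angular
part by `αβ ≤ 1` and changes the radial part from `(‖a‖ - ‖b‖)²` to `0` when both points are
clipped, and to `(‖a‖ - C)² ≤ (‖a‖ - ‖b‖)² - (‖b‖ - C)²` when only `b` is. -/

open Finset RealInnerProductSpace

section Mean

variable {ι E : Type*} [Fintype ι] [NormedAddCommGroup E] [InnerProductSpace ℝ E]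

theorem sum_sub_mean_eq_zero (y : ι → E) :
    ∑ i, (y i - (Fintype.card ι : ℝ)⁻¹ • ∑ j, y j) = 0 := by
  rcases isEmpty_or_nonempty ι with hι | hι
  · simp
  rw [sum_sub_distrib, sum_const, card_univ, ← Nat.cast_smul_eq_nsmul ℝ, smul_smul,
    mul_inv_cancel₀ (by positivity), one_smul, sub_self]

theorem sum_norm_sub_sq_eq_sum_norm_sub_mean_sq_add (y : ι → E) (v : E) :
    ∑ i, ‖y i - v‖ ^ 2 = ∑ i, ‖y i - (Fintype.card ι : ℝ)⁻¹ • ∑ j, y j‖ ^ 2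
      + Fintype.card ι * ‖(Fintype.card ι : ℝ)⁻¹ • ∑ j, y j - v‖ ^ 2 := by
  set b := (Fintype.card ι : ℝ)⁻¹ • ∑ j, y j
  have hcross : ∑ i, ⟪y i - b, b - v⟫ = 0 := by
    rw [← sum_inner, sum_sub_mean_eq_zero, inner_zero_left]
  calc ∑ i, ‖y i - v‖ ^ 2 = ∑ i, (‖y i - b‖ ^ 2 + 2 * ⟪y i - b, b - v⟫ + ‖b - v‖ ^ 2) := by
        refine sum_congr rfl fun i _ => ?_
        rw [← norm_add_sq_real, sub_add_sub_cancel]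
    _ = _ := by
        rw [sum_add_distrib, sum_add_distrib, ← mul_sum, hcross, sum_const, card_univ,
          nsmul_eq_mul]
        ring

theorem sum_norm_sub_mean_sq_le (y : ι → E) (v : E) :
    ∑ i, ‖y i - (Fintype.card ι : ℝ)⁻¹ • ∑ j, y j‖ ^ 2 ≤ ∑ i, ‖y i - v‖ ^ 2 := by
  rw [sum_norm_sub_sq_eq_sum_norm_sub_mean_sq_add y v]
  exact le_add_of_nonneg_right (by positivity)

end Mean

theorem sq_norm_sub_norm_le_sq_norm_sub {E : Type*} [SeminormedAddCommGroup E] (a b : E) :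
    (‖a‖ - ‖b‖) ^ 2 ≤ ‖a - b‖ ^ 2 := by
  rw [← sq_abs]
  exact pow_le_pow_left₀ (abs_nonneg _) (abs_norm_sub_norm_le a b) 2

section Geometry

variable {E : Type*} [NormedAddCommGroup E] [InnerProductSpace ℝ E]

theorem norm_smul_sub_smul_sq (α β : ℝ) (a b : E) :
    ‖α • a - β • b‖ ^ 2
      = (α * ‖a‖ - β * ‖b‖) ^ 2 + α * β * (‖a - b‖ ^ 2 - (‖a‖ - ‖b‖) ^ 2) := by
  rw [norm_sub_sq_real, norm_sub_sq_real, norm_smul, norm_smul, real_inner_smul_left,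
    real_inner_smul_right, Real.norm_eq_abs, Real.norm_eq_abs, mul_pow, mul_pow, sq_abs, sq_abs]
  ring

theorem norm_smul_sub_smul_sq_add_le {C : ℝ} (hC : 0 ≤ C) {a b : E} (ha : C < ‖a‖)
    (hb : C < ‖b‖) : ‖(C / ‖a‖) • a - (C / ‖b‖) • b‖ ^ 2 + (‖a‖ - ‖b‖) ^ 2 ≤ ‖a - b‖ ^ 2 := by
  have ha₀ : 0 < ‖a‖ := hC.trans_lt ha
  have hb₀ : 0 < ‖b‖ := hC.trans_lt hb
  have hαβ : C / ‖a‖ * (C / ‖b‖) ≤ 1 := by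
    rw [div_mul_div_comm, div_le_one (by positivity)]
    exact mul_le_mul ha.le hb.le hC ha₀.le
  rw [norm_smul_sub_smul_sq, div_mul_cancel₀ C ha₀.ne', div_mul_cancel₀ C hb₀.ne', sub_self]
  nlinarith [sq_norm_sub_norm_le_sq_norm_sub a b]

theorem norm_sub_smul_sq_add_le {C : ℝ} (hC : 0 ≤ C) {a b : E} (ha : ‖a‖ ≤ C)
    (hb : C < ‖b‖) : ‖a - (C / ‖b‖) • b‖ ^ 2 + (‖b‖ - C) ^ 2 ≤ ‖a - b‖ ^ 2 := by
  have hb₀ : 0 < ‖b‖ := hC.trans_lt hb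
  have hβ : C / ‖b‖ ≤ 1 := (div_le_one hb₀).2 hb.le
  have := norm_smul_sub_smul_sq 1 (C / ‖b‖) a b
  rw [one_smul, one_mul, div_mul_cancel₀ C hb₀.ne', one_mul] at this
  rw [this]
  nlinarith [sq_norm_sub_norm_le_sq_norm_sub a b, div_nonneg hC hb₀.le]

end Geometry

section Clip

variable {d : ℕ} {C : ℝ}

theorem clip_of_norm_le {x : EuclideanSpace ℝ (Fin d)} (h : ‖x‖ ≤ C) : clip C x = x := by
  rcases (norm_nonneg x).eq_or_lt with h₀ | h₀
  · simp [clip, norm_eq_zero.1 h₀.symm]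
  · rw [clip, min_eq_left ((one_le_div h₀).2 h), one_smul]

theorem clip_of_lt_norm (hC : 0 ≤ C) {x : EuclideanSpace ℝ (Fin d)} (h : C < ‖x‖) :
    clip C x = (C / ‖x‖) • x := by
  rw [clip, min_eq_right ((div_le_one (hC.trans_lt h)).2 h.le)]

theorem sq_norm_clip_sub_clip_le (hC : 0 ≤ C) (a : EuclideanSpace ℝ (Fin d))
    {b : EuclideanSpace ℝ (Fin d)} (hb : C < ‖b‖) :
    ‖clip C a - clip C b‖ ^ 2
      ≤ ‖a - b‖ ^ 2 - if C < ‖a‖ then (‖a‖ - ‖b‖) ^ 2 else (‖b‖ - C) ^ 2 := by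
  rw [clip_of_lt_norm hC hb]
  split_ifs with ha
  · rw [clip_of_lt_norm hC ha]
    linarith [norm_smul_sub_smul_sq_add_le hC ha hb]
  · rw [clip_of_norm_le (not_lt.1 ha)]
    linarith [norm_sub_smul_sq_add_le hC (not_lt.1 ha) hb]

theorem sum_sq_norm_clip_sub_mean_le {ι : Type*} [Fintype ι] (hC : 0 ≤ C)
    (x : ι → EuclideanSpace ℝ (Fin d))
    (hx : C < ‖(Fintype.card ι : ℝ)⁻¹ • ∑ j, x j‖) :
    ∑ i, ‖clip C (x i) - (Fintype.card ι : ℝ)⁻¹ • ∑ j, clip C (x j)‖ ^ 2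
      ≤ ∑ i, ‖x i - (Fintype.card ι : ℝ)⁻¹ • ∑ j, x j‖ ^ 2
        - #{i | ¬ C < ‖x i‖} * (‖(Fintype.card ι : ℝ)⁻¹ • ∑ j, x j‖ - C) ^ 2
        - ∑ i with C < ‖x i‖, (‖x i‖ - ‖(Fintype.card ι : ℝ)⁻¹ • ∑ j, x j‖) ^ 2 := by
  set xbar := (Fintype.card ι : ℝ)⁻¹ • ∑ j, x j
  calc ∑ i, ‖clip C (x i) - (Fintype.card ι : ℝ)⁻¹ • ∑ j, clip C (x j)‖ ^ 2
      ≤ ∑ i, ‖clip C (x i) - clip C xbar‖ ^ 2 := sum_norm_sub_mean_sq_le _ _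
    _ ≤ ∑ i, (‖x i - xbar‖ ^ 2 - if C < ‖x i‖ then (‖x i‖ - ‖xbar‖) ^ 2 else (‖xbar‖ - C) ^ 2) :=
        sum_le_sum fun i _ => sq_norm_clip_sub_clip_le hC (x i) hx
    _ = _ := by
        rw [sum_sub_distrib, sum_ite, sum_const, nsmul_eq_mul]
        ring

end Clip

theorem variance_reduction_large_mean_general {d m : ℕ} (C : ℝ) (hC : 0 ≤ C)
    (x : Fin m → EuclideanSpace ℝ (Fin d))
    (hxbar : ‖(m : ℝ)⁻¹ • ∑ j, x j‖ > C) :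
    (1 / (m : ℝ)) * ∑ i, ‖clip C (x i) - (m : ℝ)⁻¹ • ∑ j, clip C (x j)‖ ^ 2
      ≤ (1 / (m : ℝ)) * ∑ i, ‖x i - (m : ℝ)⁻¹ • ∑ j, x j‖ ^ 2
        - (((Finset.univ.filter (fun i => ¬ ‖x i‖ > C)).card : ℝ) / (m : ℝ))
            * (‖(m : ℝ)⁻¹ • ∑ j, x j‖ - C) ^ 2
        - (1 / (m : ℝ)) * ∑ i ∈ Finset.univ.filter (fun i => ‖x i‖ > C),
            (‖x i‖ - ‖(m : ℝ)⁻¹ • ∑ j, x j‖) ^ 2 := by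
  have h := sum_sq_norm_clip_sub_mean_le hC x (by rwa [Fintype.card_fin])
  rw [Fintype.card_fin] at h
  refine (mul_le_mul_of_nonneg_left h (one_div_nonneg.2 m.cast_nonneg)).trans_eq ?_
  ring

theorem variance_reduction_large_mean {d m : ℕ} (hm : 0 < m) (C : ℝ) (hC : 0 ≤ C)
    (x : Fin m → EuclideanSpace ℝ (Fin d))
    (hxbar : ‖(m : ℝ)⁻¹ • ∑ j, x j‖ > C) :
    (1 / (m : ℝ)) * ∑ i, ‖clip C (x i) - (m : ℝ)⁻¹ • ∑ j, clip C (x j)‖ ^ 2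
      ≤ (1 / (m : ℝ)) * ∑ i, ‖x i - (m : ℝ)⁻¹ • ∑ j, x j‖ ^ 2
        - (((Finset.univ.filter (fun i => ¬ ‖x i‖ > C)).card : ℝ) / (m : ℝ))
            * (‖(m : ℝ)⁻¹ • ∑ j, x j‖ - C) ^ 2
        - (1 / (m : ℝ)) * ∑ i ∈ Finset.univ.filter (fun i => ‖x i‖ > C),
            (‖x i‖ - ‖(m : ℝ)⁻¹ • ∑ j, x j‖) ^ 2 :=
  variance_reduction_large_mean_general C hC x hxbar
end

section
/- An (f,κ)-robust aggregation composed with static clipping is not (f,κ′)-robust for any κ′ ≥ 0: for any fixed C ∈ ℝ⁺, any (f,κ)-robust F with f ≥ 1, and any κ′ ≥ 0, there exist input vectors x_1,…,x_n and a set S of size n−f such that ‖F(clip_C(x_1),…,clip_C(x_n)) − x̄_S‖² > (κ′/|S|)·Σ_{i∈S}‖xᵢ − x̄_S‖². -/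
/-- `(f, κ)`-robustness of an aggregation rule `F`. -/
def Robust {d : ℕ} (n f : ℕ) (κ : ℝ)
    (F : (Fin n → EuclideanSpace ℝ (Fin d)) → EuclideanSpace ℝ (Fin d)) : Prop :=
  ∀ x : Fin n → EuclideanSpace ℝ (Fin d), ∀ S : Finset (Fin n), S.card = n - f →
    ‖F x - (S.card : ℝ)⁻¹ • ∑ i ∈ S, x i‖ ^ 2
      ≤ κ / (S.card : ℝ) * ∑ i ∈ S, ‖x i - (S.card : ℝ)⁻¹ • ∑ j ∈ S, x j‖ ^ 2

/-!
Feed every honest worker the same vector `v` with `‖v‖ > C`. On a constant family the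
right-hand side of the robustness inequality vanishes, so a robust `F` must return the
constant; hence `F` returns `clip C v ≠ v` on the clipped inputs, while the honest mean is `v`
and the honest spread is zero.
-/

open Finset

theorem inv_card_smul_sum_const {ι E : Type*} [AddCommGroup E] [Module ℝ E] {S : Finset ι}
    (hS : S.Nonempty) (w : E) : (#S : ℝ)⁻¹ • ∑ _i ∈ S, w = w := by
  rw [sum_const, ← Nat.cast_smul_eq_nsmul ℝ, smul_smul,
    inv_mul_cancel₀ (Nat.cast_ne_zero.mpr hS.card_pos.ne'), one_smul]

theorem exists_fin_finset_card_eq {n k : ℕ} (hk : k ≤ n) : ∃ S : Finset (Fin n), #S = k := by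
  obtain ⟨S, -, hS⟩ := exists_subset_card_eq (s := (univ : Finset (Fin n))) (by simpa using hk)
  exact ⟨S, hS⟩

theorem Robust.apply_const {d n f : ℕ} {κ : ℝ}
    {F : (Fin n → EuclideanSpace ℝ (Fin d)) → EuclideanSpace ℝ (Fin d)}
    (hF : Robust n f κ F) (hfn : f < n) (w : EuclideanSpace ℝ (Fin d)) :
    F (fun _ => w) = w := by
  obtain ⟨S, hS⟩ := exists_fin_finset_card_eq (n.sub_le f)
  have hSne : S.Nonempty := card_pos.mp (by omega)
  have h := hF (fun _ => w) S hS
  simp only [inv_card_smul_sum_const hSne, sub_self, norm_zero,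
    zero_pow two_ne_zero, sum_const_zero, mul_zero] at h
  rw [← sub_eq_zero, ← norm_eq_zero]
  exact pow_eq_zero_iff two_ne_zero |>.mp (le_antisymm h (by positivity))

theorem clip_ne_self {d : ℕ} {C : ℝ} {x : EuclideanSpace ℝ (Fin d)} (hx : x ≠ 0)
    (hC : C < ‖x‖) : clip C x ≠ x := by
  have hx' : 0 < ‖x‖ := norm_pos_iff.mpr hx
  have hscale : min 1 (C / ‖x‖) ≠ 1 :=
    (min_le_right _ _ |>.trans_lt <| (div_lt_one hx').mpr hC).ne
  intro h
  refine hscale (smul_left_injective ℝ hx ?_)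
  simpa [clip] using h

theorem static_clipping_breaks_robustness_general {d n f : ℕ} (hd : 0 < d)
    (hn : 2 * f < n) (κ : ℝ)
    (F : (Fin n → EuclideanSpace ℝ (Fin d)) → EuclideanSpace ℝ (Fin d))
    (hF : Robust n f κ F) (C : ℝ) (κ' : ℝ) :
    ∃ x : Fin n → EuclideanSpace ℝ (Fin d), ∃ S : Finset (Fin n), S.card = n - f ∧
      κ' / (S.card : ℝ) * ∑ i ∈ S, ‖x i - (S.card : ℝ)⁻¹ • ∑ j ∈ S, x j‖ ^ 2
        < ‖F (fun i => clip C (x i)) - (S.card : ℝ)⁻¹ • ∑ i ∈ S, x i‖ ^ 2 := by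
  have : Nonempty (Fin d) := ⟨⟨0, hd⟩⟩
  obtain ⟨v, hv⟩ := NormedSpace.exists_lt_norm ℝ (EuclideanSpace ℝ (Fin d)) (max C 0)
  have hv0 : v ≠ 0 := norm_pos_iff.mp ((le_max_right C 0).trans_lt hv)
  obtain ⟨S, hS⟩ := exists_fin_finset_card_eq (n.sub_le f)
  have hSne : S.Nonempty := card_pos.mp (by omega)
  refine ⟨fun _ => v, S, hS, ?_⟩
  simp only [inv_card_smul_sum_const hSne, sub_self, norm_zero,
    zero_pow two_ne_zero, sum_const_zero, mul_zero, hF.apply_const (by omega)]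
  exact pow_pos (norm_pos_iff.mpr <| sub_ne_zero.mpr <|
    clip_ne_self hv0 ((le_max_left C 0).trans_lt hv)) 2

theorem static_clipping_breaks_robustness {d n f : ℕ} (hd : 0 < d) (hf : 1 ≤ f)
    (hn : 2 * f < n) (κ : ℝ)
    (F : (Fin n → EuclideanSpace ℝ (Fin d)) → EuclideanSpace ℝ (Fin d))
    (hF : Robust n f κ F) (C : ℝ) (hC : 0 ≤ C) (κ' : ℝ) (hκ' : 0 ≤ κ') :
    ∃ x : Fin n → EuclideanSpace ℝ (Fin d), ∃ S : Finset (Fin n), S.card = n - f ∧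
      κ' / (S.card : ℝ) * ∑ i ∈ S, ‖x i - (S.card : ℝ)⁻¹ • ∑ j ∈ S, x j‖ ^ 2
        < ‖F (fun i => clip C (x i)) - (S.card : ℝ)⁻¹ • ∑ i ∈ S, x i‖ ^ 2 :=
  static_clipping_breaks_robustness_general hd hn κ F hF C κ'
end
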